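/- Assume Q_f = P and let OPT = inf_{u ∈ (ℝ^m)^T} J(u). Then OPT = Σ_{t=0}^{T−1} ψ_tᵀ (P⁻¹ − F P⁻¹ Fᵀ − H) ψ_t + (Fᵀ ψ_0 + P x_0)ᵀ P⁻¹ (Fᵀ ψ_0 + P x_0); in particular, OPT ≥ λ_min(P⁻¹ − F P⁻¹ Fᵀ − H) · Σ_{t=0}^{T−1} ‖ψ_t‖², where λ_min denotes the smallest eigenvalue of the symmetric matrix P⁻¹ − F P⁻¹ Fᵀ − H. -/

import Mathlib

open Matrix

noncomputable def evNorm {n : ℕ} (x : Fin n → ℝ) : ℝ := Real.sqrt (∑ i, x i ^ 2)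

noncomputable def specNorm {n m : ℕ} (M : Matrix (Fin n) (Fin m) ℝ) : ℝ :=
  sSup {c : ℝ | ∃ x : Fin m → ℝ, evNorm x ≤ 1 ∧ c = evNorm (M *ᵥ x)}

noncomputable def lambdaMin {n : ℕ} (M : Matrix (Fin n) (Fin n) ℝ) : ℝ :=
  sInf {c : ℝ | ∃ x : Fin n → ℝ, evNorm x = 1 ∧ c = x ⬝ᵥ (M *ᵥ x)}

noncomputable def specRad {n : ℕ} (M : Matrix (Fin n) (Fin n) ℝ) : ENNReal :=
  spectralRadius ℂ (M.map Complex.ofReal)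

noncomputable def seqState {n m : ℕ} (A : Matrix (Fin n) (Fin n) ℝ)
    (B : Matrix (Fin n) (Fin m) ℝ) (x0 : Fin n → ℝ)
    (u : ℕ → Fin m → ℝ) (w : ℕ → Fin n → ℝ) : ℕ → Fin n → ℝ
  | 0 => x0
  | t + 1 => A *ᵥ seqState A B x0 u w t + B *ᵥ u t + w t

noncomputable def trajCost {n m : ℕ} (A : Matrix (Fin n) (Fin n) ℝ)
    (B : Matrix (Fin n) (Fin m) ℝ) (Q : Matrix (Fin n) (Fin n) ℝ)
    (R : Matrix (Fin m) (Fin m) ℝ) (Qf : Matrix (Fin n) (Fin n) ℝ)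
    (x0 : Fin n → ℝ) (w : ℕ → Fin n → ℝ) (T : ℕ) (u : ℕ → Fin m → ℝ) : ℝ :=
  (∑ t ∈ Finset.range T,
      (seqState A B x0 u w t ⬝ᵥ (Q *ᵥ seqState A B x0 u w t) + u t ⬝ᵥ (R *ᵥ u t)))
    + seqState A B x0 u w T ⬝ᵥ (Qf *ᵥ seqState A B x0 u w T)

noncomputable def mpcCost {n m : ℕ} (A : Matrix (Fin n) (Fin n) ℝ)
    (B : Matrix (Fin n) (Fin m) ℝ) (Q : Matrix (Fin n) (Fin n) ℝ)
    (R : Matrix (Fin m) (Fin m) ℝ) (P : Matrix (Fin n) (Fin n) ℝ)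
    (z : Fin n → ℝ) (what : ℕ → Fin n → ℝ) (k : ℕ) (u : Fin k → Fin m → ℝ) : ℝ :=
  trajCost A B Q R P z what k (fun t => if h : t < k then u ⟨t, h⟩ else 0)

/-!
Write `S = R + BᵀPB`, `M = P⁻¹ - FP⁻¹Fᵀ - H` and `W t x = (Fᵀψ_t + P x)ᵀ P⁻¹ (Fᵀψ_t + P x)`
(`costToGo`). Completing the square in the input and using the Riccati equation gives, for each
stage, `x_tᵀQx_t + u_tᵀRu_t + W (t+1) x_{t+1} = W t x_t + ψ_tᵀMψ_t + ‖u_t - u*_t‖²_S`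
with `u*_t = -S⁻¹Bᵀ(PAx_t + ψ_t)`, because `ψ_t = P w_t + Fᵀψ_{t+1}`. As `ψ_T = 0`, `W T` is the
terminal cost `xᵀPx`, so summing telescopes: `J(u)` is the claimed value plus a sum of
`S`-squares, which vanishes for the feedback `u_t = u*_t(x_t)`. The eigenvalue bound follows
since `W 0 x_0 ≥ 0` and each `ψ_tᵀMψ_t ≥ λ_min(M)‖ψ_t‖²`.
-/

open Finset

section Inverse

variable {κ α : Type*} [Fintype κ] [DecidableEq κ] [CommRing α] {S : Matrix κ κ α}

lemma Matrix.mulVec_nonsing_inv_mulVec (h : IsUnit S.det) (v : κ → α) : S *ᵥ (S⁻¹ *ᵥ v) = v := by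
  rw [mulVec_mulVec, mul_nonsing_inv S h, one_mulVec]

lemma Matrix.nonsing_inv_mulVec_mulVec (h : IsUnit S.det) (v : κ → α) : S⁻¹ *ᵥ (S *ᵥ v) = v := by
  rw [mulVec_mulVec, nonsing_inv_mul S h, one_mulVec]

end Inverse

section QuadraticForm

variable {ι κ α : Type*} [Fintype ι] [Fintype κ] [CommRing α]

lemma Matrix.IsSymm.dotProduct_mulVec_comm {M : Matrix ι ι α} (hM : M.IsSymm) (x y : ι → α) :
    x ⬝ᵥ (M *ᵥ y) = y ⬝ᵥ (M *ᵥ x) := by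
  simpa [hM.eq] using dotProduct_transpose_mulVec M x y

lemma dotProduct_transpose_mulVec_eq_mulVec_dotProduct (M : Matrix ι κ α) (x : κ → α)
    (y : ι → α) : x ⬝ᵥ (Mᵀ *ᵥ y) = (M *ᵥ x) ⬝ᵥ y := by
  rw [dotProduct_transpose_mulVec, dotProduct_comm]

variable [DecidableEq κ]

lemma dotProduct_mulVec_add_inv_mulVec {S : Matrix κ κ α} (hS : S.IsSymm) (hSdet : IsUnit S.det)
    (u g : κ → α) :
    (u + S⁻¹ *ᵥ g) ⬝ᵥ (S *ᵥ (u + S⁻¹ *ᵥ g)) =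
      u ⬝ᵥ (S *ᵥ u) + 2 * (g ⬝ᵥ u) + g ⬝ᵥ (S⁻¹ *ᵥ g) := by
  have hcross : (S⁻¹ *ᵥ g) ⬝ᵥ (S *ᵥ u) = g ⬝ᵥ u := by
    rw [hS.dotProduct_mulVec_comm, mulVec_nonsing_inv_mulVec hSdet, dotProduct_comm]
  simp only [mulVec_add, dotProduct_add, add_dotProduct, mulVec_nonsing_inv_mulVec hSdet, hcross,
    dotProduct_comm u g, dotProduct_comm (S⁻¹ *ᵥ g) g]
  ring

lemma mulVec_add_dotProduct_inv_mulVec {S : Matrix κ κ α} (hS : S.IsSymm) (hSdet : IsUnit S.det)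
    (u g : κ → α) :
    (S *ᵥ u + g) ⬝ᵥ (S⁻¹ *ᵥ (S *ᵥ u + g)) =
      u ⬝ᵥ (S *ᵥ u) + 2 * (g ⬝ᵥ u) + g ⬝ᵥ (S⁻¹ *ᵥ g) := by
  have hSu : S *ᵥ u + g = S *ᵥ (u + S⁻¹ *ᵥ g) := by
    rw [mulVec_add, mulVec_nonsing_inv_mulVec hSdet]
  rw [hSu, nonsing_inv_mulVec_mulVec hSdet, dotProduct_comm,
    dotProduct_mulVec_add_inv_mulVec hS hSdet]

lemma quadForm_input_complete_square {P : Matrix ι ι α} {B : Matrix ι κ α} {R S : Matrix κ κ α}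
    (hP : P.IsSymm) (hS : S.IsSymm) (hSdet : IsUnit S.det) (hSR : S = R + Bᵀ * P * B)
    (y q : ι → α) (u : κ → α) {g : κ → α} (hg : g = Bᵀ *ᵥ (P *ᵥ y + q)) :
    u ⬝ᵥ (R *ᵥ u) + (y + B *ᵥ u) ⬝ᵥ (P *ᵥ (y + B *ᵥ u)) + 2 * (q ⬝ᵥ (y + B *ᵥ u)) =
      y ⬝ᵥ (P *ᵥ y) + 2 * (q ⬝ᵥ y) - g ⬝ᵥ (S⁻¹ *ᵥ g) +
        (u + S⁻¹ *ᵥ g) ⬝ᵥ (S *ᵥ (u + S⁻¹ *ᵥ g)) := by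
  have hSu : u ⬝ᵥ (S *ᵥ u) = u ⬝ᵥ (R *ᵥ u) + (B *ᵥ u) ⬝ᵥ (P *ᵥ (B *ᵥ u)) := by
    rw [hSR, add_mulVec, dotProduct_add, ← mulVec_mulVec, ← mulVec_mulVec,
      dotProduct_transpose_mulVec_eq_mulVec_dotProduct]
  have hgu : g ⬝ᵥ u = (B *ᵥ u) ⬝ᵥ (P *ᵥ y) + q ⬝ᵥ (B *ᵥ u) := by
    rw [hg, dotProduct_comm, dotProduct_transpose_mulVec_eq_mulVec_dotProduct, dotProduct_add,
      dotProduct_comm q]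
  have hPyBu : y ⬝ᵥ (P *ᵥ (B *ᵥ u)) = (B *ᵥ u) ⬝ᵥ (P *ᵥ y) := hP.dotProduct_mulVec_comm _ _
  rw [dotProduct_mulVec_add_inv_mulVec hS hSdet, hSu, hgu]
  simp only [mulVec_add, dotProduct_add, add_dotProduct, hPyBu]
  ring

lemma riccati_step {A P Q F H : Matrix ι ι α} {B : Matrix ι κ α} {S : Matrix κ κ α}
    (hP : P.IsSymm) (hS : S.IsSymm) (hSdet : IsUnit S.det)
    (hDARE : P = Q + Aᵀ * P * A - Aᵀ * P * B * S⁻¹ * (Bᵀ * P * A))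
    (hF : F = A - B * (S⁻¹ * (Bᵀ * P * A))) (hH : H = B * S⁻¹ * Bᵀ)
    (x w p' : ι → α) {p : ι → α} (hp : p = P *ᵥ w + Fᵀ *ᵥ p') :
    x ⬝ᵥ (Q *ᵥ x) + (A *ᵥ x + w) ⬝ᵥ (P *ᵥ (A *ᵥ x + w)) + 2 * ((Fᵀ *ᵥ p') ⬝ᵥ (A *ᵥ x + w))
        - (Bᵀ *ᵥ (P *ᵥ (A *ᵥ x) + p)) ⬝ᵥ (S⁻¹ *ᵥ (Bᵀ *ᵥ (P *ᵥ (A *ᵥ x) + p))) =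
      x ⬝ᵥ (P *ᵥ x) + 2 * ((Fᵀ *ᵥ p) ⬝ᵥ x)
        + (w ⬝ᵥ (P *ᵥ w) + 2 * ((Fᵀ *ᵥ p') ⬝ᵥ w) - p ⬝ᵥ (H *ᵥ p)) := by
  -- `k = K x` for the LQR gain `K = S⁻¹ Bᵀ P A`, so that `F x = A x - B k`.
  set k := S⁻¹ *ᵥ (Bᵀ *ᵥ (P *ᵥ (A *ᵥ x)))
  set r := S⁻¹ *ᵥ (Bᵀ *ᵥ p)
  have hSk : S *ᵥ k = Bᵀ *ᵥ (P *ᵥ (A *ᵥ x)) := mulVec_nonsing_inv_mulVec hSdet _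
  have hSr : S *ᵥ r = Bᵀ *ᵥ p := mulVec_nonsing_inv_mulVec hSdet _
  have hg : (Bᵀ *ᵥ (P *ᵥ (A *ᵥ x) + p)) ⬝ᵥ (S⁻¹ *ᵥ (Bᵀ *ᵥ (P *ᵥ (A *ᵥ x) + p))) =
      k ⬝ᵥ (S *ᵥ k) + 2 * (r ⬝ᵥ (S *ᵥ k)) + r ⬝ᵥ (S *ᵥ r) := by
    rw [mulVec_add, ← hSk, ← hSr, ← mulVec_add, nonsing_inv_mulVec_mulVec hSdet, dotProduct_comm]
    simp only [mulVec_add, dotProduct_add, add_dotProduct, hS.dotProduct_mulVec_comm k r]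
    ring
  have hQx : x ⬝ᵥ (Q *ᵥ x) = x ⬝ᵥ (P *ᵥ x) - (A *ᵥ x) ⬝ᵥ (P *ᵥ (A *ᵥ x)) + k ⬝ᵥ (S *ᵥ k) := by
    have hQ : Q = P - Aᵀ * P * A + Aᵀ * P * B * S⁻¹ * (Bᵀ * P * A) := by
      nth_rw 1 [hDARE]; abel
    rw [hQ, hSk]
    simp only [add_mulVec, sub_mulVec, dotProduct_add, dotProduct_sub, ← mulVec_mulVec,
      dotProduct_transpose_mulVec_eq_mulVec_dotProduct]
    exact congrArg _ (hP.dotProduct_mulVec_comm _ _)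
  have hFx : (Fᵀ *ᵥ p) ⬝ᵥ x = p ⬝ᵥ (A *ᵥ x) - p ⬝ᵥ (B *ᵥ k) := by
    rw [dotProduct_comm, dotProduct_transpose_mulVec_eq_mulVec_dotProduct, hF]
    simp only [sub_mulVec, ← mulVec_mulVec, sub_dotProduct]
    rw [dotProduct_comm (A *ᵥ x), dotProduct_comm (B *ᵥ _)]
  have hpHp : p ⬝ᵥ (H *ᵥ p) = r ⬝ᵥ (S *ᵥ r) := by
    rw [hH, ← mulVec_mulVec, ← mulVec_mulVec, dotProduct_comm,
      ← dotProduct_transpose_mulVec_eq_mulVec_dotProduct, hSr]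
  have hrk : r ⬝ᵥ (S *ᵥ k) = p ⬝ᵥ (B *ᵥ k) := by
    rw [hS.dotProduct_mulVec_comm, hSr, dotProduct_transpose_mulVec_eq_mulVec_dotProduct,
      dotProduct_comm]
  rw [hg, hQx, hFx, hpHp, hrk, hp]
  simp only [add_dotProduct, dotProduct_add, mulVec_add, hP.dotProduct_mulVec_comm w (A *ᵥ x),
    dotProduct_comm (P *ᵥ w) (A *ᵥ x)]
  ring

variable [DecidableEq ι]

noncomputable def costToGo (P F : Matrix ι ι α) (p x : ι → α) : α :=
  (Fᵀ *ᵥ p + P *ᵥ x) ⬝ᵥ (P⁻¹ *ᵥ (Fᵀ *ᵥ p + P *ᵥ x))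

lemma costToGo_eq {P : Matrix ι ι α} (hP : P.IsSymm) (hPdet : IsUnit P.det) (F : Matrix ι ι α)
    (p x : ι → α) :
    costToGo P F p x = x ⬝ᵥ (P *ᵥ x) + 2 * ((Fᵀ *ᵥ p) ⬝ᵥ x) + p ⬝ᵥ ((F * P⁻¹ * Fᵀ) *ᵥ p) := by
  rw [costToGo, add_comm, mulVec_add_dotProduct_inv_mulVec hP hPdet, ← mulVec_mulVec,
    ← mulVec_mulVec, ← dotProduct_transpose_mulVec_eq_mulVec_dotProduct Fᵀ p (P⁻¹ *ᵥ (Fᵀ *ᵥ p)),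
    transpose_transpose]

lemma stageCost_add_costToGo {A P Q F H : Matrix ι ι α} {B : Matrix ι κ α} {R S : Matrix κ κ α}
    (hP : P.IsSymm) (hPdet : IsUnit P.det) (hS : S.IsSymm) (hSdet : IsUnit S.det)
    (hSR : S = R + Bᵀ * P * B)
    (hDARE : P = Q + Aᵀ * P * A - Aᵀ * P * B * S⁻¹ * (Bᵀ * P * A))
    (hF : F = A - B * (S⁻¹ * (Bᵀ * P * A))) (hH : H = B * S⁻¹ * Bᵀ)
    (x w p' : ι → α) (u : κ → α) {p : ι → α} (hp : p = P *ᵥ w + Fᵀ *ᵥ p') :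
    x ⬝ᵥ (Q *ᵥ x) + u ⬝ᵥ (R *ᵥ u) + costToGo P F p' (A *ᵥ x + B *ᵥ u + w) =
      costToGo P F p x + p ⬝ᵥ ((P⁻¹ - F * P⁻¹ * Fᵀ - H) *ᵥ p) +
        (u + S⁻¹ *ᵥ (Bᵀ *ᵥ (P *ᵥ (A *ᵥ x) + p))) ⬝ᵥ
          (S *ᵥ (u + S⁻¹ *ᵥ (Bᵀ *ᵥ (P *ᵥ (A *ᵥ x) + p)))) := by
  have hinput := quadForm_input_complete_square hP hS hSdet hSR (A *ᵥ x + w) (Fᵀ *ᵥ p') u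
    (g := Bᵀ *ᵥ (P *ᵥ (A *ᵥ x) + p)) (by rw [hp, ← add_assoc, ← mulVec_add])
  have hriccati := riccati_step hP hS hSdet hDARE hF hH x w p' hp
  have hp_sq : p ⬝ᵥ (P⁻¹ *ᵥ p) =
      w ⬝ᵥ (P *ᵥ w) + 2 * ((Fᵀ *ᵥ p') ⬝ᵥ w) + p' ⬝ᵥ ((F * P⁻¹ * Fᵀ) *ᵥ p') := by
    rw [hp, add_comm, ← costToGo, costToGo_eq hP hPdet]
  rw [costToGo_eq hP hPdet, costToGo_eq hP hPdet, add_right_comm (A *ᵥ x), sub_mulVec,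
    sub_mulVec, dotProduct_sub, dotProduct_sub]
  linear_combination hinput + hriccati - hp_sq

end QuadraticForm

lemma backwardSum_eq_add {ι α : Type*} [Fintype ι] [DecidableEq ι] [CommRing α]
    {G P : Matrix ι ι α} (w : ℕ → ι → α) {T t : ℕ} (ht : t < T) :
    ∑ i ∈ range (T - t), (G ^ i * P) *ᵥ w (t + i) =
      P *ᵥ w t + G *ᵥ ∑ i ∈ range (T - (t + 1)), (G ^ i * P) *ᵥ w (t + 1 + i) := by
  rw [show T - t = T - (t + 1) + 1 by omega, sum_range_succ', mulVec_sum, add_comm]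
  congr 1
  · simp
  · refine sum_congr rfl fun i _ => ?_
    rw [pow_succ', Matrix.mul_assoc, ← mulVec_mulVec, show t + (i + 1) = t + 1 + i by omega]

section Trajectory

variable {n m : ℕ}

noncomputable def closedLoopState (A : Matrix (Fin n) (Fin n) ℝ) (B : Matrix (Fin n) (Fin m) ℝ)
    (x0 : Fin n → ℝ) (w : ℕ → Fin n → ℝ) (κ : ℕ → (Fin n → ℝ) → Fin m → ℝ) : ℕ → Fin n → ℝ
  | 0 => x0
  | t + 1 => A *ᵥ closedLoopState A B x0 w κ t + B *ᵥ κ t (closedLoopState A B x0 w κ t) + w t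

lemma seqState_closedLoop (A : Matrix (Fin n) (Fin n) ℝ) (B : Matrix (Fin n) (Fin m) ℝ)
    (x0 : Fin n → ℝ) (w : ℕ → Fin n → ℝ) (κ : ℕ → (Fin n → ℝ) → Fin m → ℝ) :
    seqState A B x0 (fun t => κ t (closedLoopState A B x0 w κ t)) w =
      closedLoopState A B x0 w κ := by
  funext t
  induction t with
  | zero => rfl
  | succ t ih => simp only [seqState, closedLoopState, ih]

variable {A Q P F H : Matrix (Fin n) (Fin n) ℝ} {B : Matrix (Fin n) (Fin m) ℝ}
  {R S : Matrix (Fin m) (Fin m) ℝ} {x0 : Fin n → ℝ} {w ψ : ℕ → Fin n → ℝ} {T : ℕ}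

lemma trajCost_eq_completed_square (hP : P.IsSymm) (hPdet : IsUnit P.det) (hS : S.IsSymm)
    (hSdet : IsUnit S.det)
    (hSR : S = R + Bᵀ * P * B)
    (hDARE : P = Q + Aᵀ * P * A - Aᵀ * P * B * S⁻¹ * (Bᵀ * P * A))
    (hF : F = A - B * (S⁻¹ * (Bᵀ * P * A))) (hH : H = B * S⁻¹ * Bᵀ)
    (hψ : ∀ t < T, ψ t = P *ᵥ w t + Fᵀ *ᵥ ψ (t + 1)) (hψT : ψ T = 0) (v : ℕ → Fin m → ℝ) :
    trajCost A B Q R P x0 w T v =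
      ∑ t ∈ range T, ψ t ⬝ᵥ ((P⁻¹ - F * P⁻¹ * Fᵀ - H) *ᵥ ψ t) + costToGo P F (ψ 0) x0 +
        ∑ t ∈ range T,
          (v t + S⁻¹ *ᵥ (Bᵀ *ᵥ (P *ᵥ (A *ᵥ seqState A B x0 v w t) + ψ t))) ⬝ᵥ
            (S *ᵥ (v t + S⁻¹ *ᵥ (Bᵀ *ᵥ (P *ᵥ (A *ᵥ seqState A B x0 v w t) + ψ t)))) := by
  set x := seqState A B x0 v w
  have hstep : ∀ t ∈ range T, x t ⬝ᵥ (Q *ᵥ x t) + v t ⬝ᵥ (R *ᵥ v t) =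
      (costToGo P F (ψ t) (x t) - costToGo P F (ψ (t + 1)) (x (t + 1))) +
        ψ t ⬝ᵥ ((P⁻¹ - F * P⁻¹ * Fᵀ - H) *ᵥ ψ t) +
        (v t + S⁻¹ *ᵥ (Bᵀ *ᵥ (P *ᵥ (A *ᵥ x t) + ψ t))) ⬝ᵥ
          (S *ᵥ (v t + S⁻¹ *ᵥ (Bᵀ *ᵥ (P *ᵥ (A *ᵥ x t) + ψ t)))) := by
    intro t ht
    have := stageCost_add_costToGo hP hPdet hS hSdet hSR hDARE hF hH (x t) (w t) (ψ (t + 1))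
      (v t) (hψ t (mem_range.mp ht))
    simp only [x, seqState] at this ⊢
    linarith
  have hfinal : costToGo P F (ψ T) (x T) = x T ⬝ᵥ (P *ᵥ x T) := by
    simp [costToGo_eq hP hPdet, hψT]
  rw [trajCost, sum_congr rfl hstep, sum_add_distrib, sum_add_distrib, sum_range_sub', ← hfinal]
  change costToGo P F (ψ 0) x0 - _ + _ + _ + _ = _
  ring

lemma iInf_trajCost_eq (hP : P.IsSymm) (hPdet : IsUnit P.det) (hSpd : S.PosDef)
    (hSR : S = R + Bᵀ * P * B)
    (hDARE : P = Q + Aᵀ * P * A - Aᵀ * P * B * S⁻¹ * (Bᵀ * P * A))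
    (hF : F = A - B * (S⁻¹ * (Bᵀ * P * A))) (hH : H = B * S⁻¹ * Bᵀ)
    (hψ : ∀ t < T, ψ t = P *ᵥ w t + Fᵀ *ᵥ ψ (t + 1)) (hψT : ψ T = 0) :
    ⨅ v : ℕ → Fin m → ℝ, trajCost A B Q R P x0 w T v =
      ∑ t ∈ range T, ψ t ⬝ᵥ ((P⁻¹ - F * P⁻¹ * Fᵀ - H) *ᵥ ψ t) + costToGo P F (ψ 0) x0 := by
  have hS : S.IsSymm := isHermitian_iff_isSymm.mp hSpd.isHermitian
  have hSdet : IsUnit S.det := (isUnit_iff_isUnit_det S).mp hSpd.isUnit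
  have hcost :=
    trajCost_eq_completed_square (x0 := x0) hP hPdet hS hSdet hSR hDARE hF hH hψ hψT
  have hlower : ∀ v, ∑ t ∈ range T, ψ t ⬝ᵥ ((P⁻¹ - F * P⁻¹ * Fᵀ - H) *ᵥ ψ t) +
      costToGo P F (ψ 0) x0 ≤ trajCost A B Q R P x0 w T v := fun v => by
    rw [hcost]
    exact le_add_of_nonneg_right <| sum_nonneg fun t _ => by
      simpa only [star_trivial] using hSpd.posSemidef.dotProduct_mulVec_nonneg _
  let κ : ℕ → (Fin n → ℝ) → Fin m → ℝ := fun t x => -(S⁻¹ *ᵥ (Bᵀ *ᵥ (P *ᵥ (A *ᵥ x) + ψ t)))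
  have hopt : trajCost A B Q R P x0 w T (fun t => κ t (closedLoopState A B x0 w κ t)) =
      ∑ t ∈ range T, ψ t ⬝ᵥ ((P⁻¹ - F * P⁻¹ * Fᵀ - H) *ᵥ ψ t) + costToGo P F (ψ 0) x0 := by
    rw [hcost, seqState_closedLoop]
    simp only [κ, neg_add_cancel, mulVec_zero, dotProduct_zero, sum_const_zero, add_zero]
  exact le_antisymm (hopt ▸ ciInf_le ⟨_, Set.forall_mem_range.2 hlower⟩ _) (le_ciInf hlower)

end Trajectory

section RayleighQuotient

variable {n : ℕ}

lemma evNorm_eq_norm (x : Fin n → ℝ) : evNorm x = ‖WithLp.toLp 2 x‖ := by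
  simp [evNorm, EuclideanSpace.norm_eq, sq_abs]

lemma abs_le_evNorm (x : Fin n → ℝ) (i : Fin n) : |x i| ≤ evNorm x := by
  rw [evNorm_eq_norm]
  exact PiLp.norm_apply_le (WithLp.toLp 2 x) i

lemma evNorm_smul (c : ℝ) (x : Fin n → ℝ) : evNorm (c • x) = |c| * evNorm x := by
  rw [evNorm_eq_norm, evNorm_eq_norm, WithLp.toLp_smul, norm_smul, Real.norm_eq_abs]

lemma evNorm_pos {x : Fin n → ℝ} (hx : x ≠ 0) : 0 < evNorm x := by
  rw [evNorm_eq_norm]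
  simpa using hx

lemma neg_sum_abs_le_dotProduct_mulVec (M : Matrix (Fin n) (Fin n) ℝ) {y : Fin n → ℝ}
    (hy : ∀ i, |y i| ≤ 1) : -∑ i, ∑ j, |M i j| ≤ y ⬝ᵥ (M *ᵥ y) := by
  have hterm : ∀ i j, -|M i j| ≤ y i * (M i j * y j) := fun i j => by
    have : |y i * (M i j * y j)| ≤ |M i j| := by
      rw [abs_mul, abs_mul]
      calc |y i| * (|M i j| * |y j|) ≤ 1 * (|M i j| * 1) := by gcongr <;> exact hy _
        _ = |M i j| := by ring
    exact (abs_le.mp this).1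
  simp only [dotProduct, mulVec, Finset.mul_sum, ← sum_neg_distrib]
  exact sum_le_sum fun i _ => sum_le_sum fun j _ => hterm i j

lemma lambdaMin_mul_evNorm_sq_le (M : Matrix (Fin n) (Fin n) ℝ) (x : Fin n → ℝ) :
    lambdaMin M * evNorm x ^ 2 ≤ x ⬝ᵥ (M *ᵥ x) := by
  rcases eq_or_ne x 0 with rfl | hx
  · simp [evNorm]
  have hbdd : BddBelow {c : ℝ | ∃ y : Fin n → ℝ, evNorm y = 1 ∧ c = y ⬝ᵥ (M *ᵥ y)} := by
    refine ⟨-∑ i, ∑ j, |M i j|, ?_⟩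
    rintro _ ⟨y, hy, rfl⟩
    exact neg_sum_abs_le_dotProduct_mulVec M fun i => hy ▸ abs_le_evNorm y i
  have hr := evNorm_pos hx
  have hunit : evNorm ((evNorm x)⁻¹ • x) = 1 := by
    rw [evNorm_smul, abs_inv, abs_of_pos hr, inv_mul_cancel₀ hr.ne']
  have hle := csInf_le hbdd ⟨_, hunit, rfl⟩
  rw [mulVec_smul, smul_dotProduct, dotProduct_smul, smul_eq_mul, smul_eq_mul] at hle
  calc lambdaMin M * evNorm x ^ 2
      ≤ (evNorm x)⁻¹ * ((evNorm x)⁻¹ * (x ⬝ᵥ (M *ᵥ x))) * evNorm x ^ 2 :=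
        mul_le_mul_of_nonneg_right hle (sq_nonneg _)
    _ = x ⬝ᵥ (M *ᵥ x) := by field_simp

end RayleighQuotient

theorem stmt4_general (n m T : ℕ)
    (A : Matrix (Fin n) (Fin n) ℝ) (B : Matrix (Fin n) (Fin m) ℝ)
    (Q : Matrix (Fin n) (Fin n) ℝ) (R : Matrix (Fin m) (Fin m) ℝ)
    (P : Matrix (Fin n) (Fin n) ℝ)
    (hR : R.PosDef) (hP : P.PosDef)
    (hDARE : P = Q + Aᵀ * P * A - Aᵀ * P * B * (R + Bᵀ * P * B)⁻¹ * (Bᵀ * P * A))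
    (F : Matrix (Fin n) (Fin n) ℝ)
    (hF : F = A - B * ((R + Bᵀ * P * B)⁻¹ * (Bᵀ * P * A)))
    (Hmat : Matrix (Fin n) (Fin n) ℝ)
    (hHmat : Hmat = B * (R + Bᵀ * P * B)⁻¹ * Bᵀ)
    (x0 : Fin n → ℝ) (w : ℕ → Fin n → ℝ)
    (ψ : ℕ → Fin n → ℝ)
    (hψ : ∀ t, ψ t = ∑ i ∈ Finset.range (T - t), ((Fᵀ) ^ i * P) *ᵥ w (t + i)) :
    (⨅ v : ℕ → Fin m → ℝ, trajCost A B Q R P x0 w T v) =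
      (∑ t ∈ Finset.range T, ψ t ⬝ᵥ ((P⁻¹ - F * P⁻¹ * Fᵀ - Hmat) *ᵥ ψ t))
        + (Fᵀ *ᵥ ψ 0 + P *ᵥ x0) ⬝ᵥ (P⁻¹ *ᵥ (Fᵀ *ᵥ ψ 0 + P *ᵥ x0)) ∧
    lambdaMin (P⁻¹ - F * P⁻¹ * Fᵀ - Hmat) * ∑ t ∈ Finset.range T, evNorm (ψ t) ^ 2 ≤
      ⨅ v : ℕ → Fin m → ℝ, trajCost A B Q R P x0 w T v := by
  set S := R + Bᵀ * P * B with hSR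
  have hSpd : S.PosDef :=
    hR.add_posSemidef (by simpa using hP.posSemidef.conjTranspose_mul_mul_same B)
  have hPsymm : P.IsSymm := isHermitian_iff_isSymm.mp hP.isHermitian
  have hPdet : IsUnit P.det := (isUnit_iff_isUnit_det P).mp hP.isUnit
  have hψrec : ∀ t < T, ψ t = P *ᵥ w t + Fᵀ *ᵥ ψ (t + 1) := fun t ht => by
    rw [hψ, hψ, backwardSum_eq_add w ht]
  have hψT : ψ T = 0 := by simp [hψ]
  have hopt := iInf_trajCost_eq (x0 := x0) hPsymm hPdet hSpd hSR hDARE hF hHmat hψrec hψT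
  refine ⟨hopt, ?_⟩
  have hcostToGo : 0 ≤ costToGo P F (ψ 0) x0 := by
    simpa only [costToGo, star_trivial] using hP.inv.posSemidef.dotProduct_mulVec_nonneg _
  have hrayleigh := sum_le_sum fun t (_ : t ∈ range T) =>
    lambdaMin_mul_evNorm_sq_le (P⁻¹ - F * P⁻¹ * Fᵀ - Hmat) (ψ t)
  rw [← mul_sum] at hrayleigh
  linarith

theorem stmt4 (n m T : ℕ)
    (A : Matrix (Fin n) (Fin n) ℝ) (B : Matrix (Fin n) (Fin m) ℝ)
    (Q : Matrix (Fin n) (Fin n) ℝ) (R : Matrix (Fin m) (Fin m) ℝ)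
    (P : Matrix (Fin n) (Fin n) ℝ)
    (hQ : Q.PosSemidef) (hR : R.PosDef) (hP : P.PosDef)
    (hDARE : P = Q + Aᵀ * P * A - Aᵀ * P * B * (R + Bᵀ * P * B)⁻¹ * (Bᵀ * P * A))
    (F : Matrix (Fin n) (Fin n) ℝ)
    (hF : F = A - B * ((R + Bᵀ * P * B)⁻¹ * (Bᵀ * P * A)))
    (Hmat : Matrix (Fin n) (Fin n) ℝ)
    (hHmat : Hmat = B * (R + Bᵀ * P * B)⁻¹ * Bᵀ)
    (x0 : Fin n → ℝ) (w : ℕ → Fin n → ℝ)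
    (ψ : ℕ → Fin n → ℝ)
    (hψ : ∀ t, ψ t = ∑ i ∈ Finset.range (T - t), ((Fᵀ) ^ i * P) *ᵥ w (t + i)) :
    (⨅ v : ℕ → Fin m → ℝ, trajCost A B Q R P x0 w T v) =
      (∑ t ∈ Finset.range T, ψ t ⬝ᵥ ((P⁻¹ - F * P⁻¹ * Fᵀ - Hmat) *ᵥ ψ t))
        + (Fᵀ *ᵥ ψ 0 + P *ᵥ x0) ⬝ᵥ (P⁻¹ *ᵥ (Fᵀ *ᵥ ψ 0 + P *ᵥ x0)) ∧
    lambdaMin (P⁻¹ - F * P⁻¹ * Fᵀ - Hmat) * ∑ t ∈ Finset.range T, evNorm (ψ t) ^ 2 ≤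
      ⨅ v : ℕ → Fin m → ℝ, trajCost A B Q R P x0 w T v :=
  stmt4_general n m T A B Q R P hR hP hDARE F hF Hmat hHmat x0 w ψ hψ
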